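/- Let (M, M', B, V) be jointly distributed random variables on finite sets such that B ∈ {0,1}, the event B = 0 implies M = M', and Pr[B = 1] ≤ δ ≤ 1/2. Then I(V; M) ≤ I(V; M') + δ·log₂|𝒱| + H₂(δ), where |𝒱| is the size of the range of V and H₂ is the binary entropy function. -/
import Mathlib


open Finset

def IsDist {α : Type*} [Fintype α] (p : α → ℝ) : Prop :=
  (∀ x, 0 ≤ p x) ∧ ∑ x, p x = 1

/-- Mutual information (in bits) of a joint distribution on a finite product. -/
noncomputable def mutualInfoBits {α β : Type*} [Fintype α] [Fintype β]
    (j : α × β → ℝ) : ℝ :=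
  ∑ p : α × β,
    if j p = 0 then 0
    else j p * Real.logb 2 (j p / ((∑ b, j (p.1, b)) * (∑ a, j (a, p.2))))

namespace Stmt10
open Real
set_option linter.unusedSectionVars false
variable {ι ι' κ κ' : Type*} [Fintype ι] [Fintype ι'] [Fintype κ] [Fintype κ']

open Classical in
noncomputable def push (pr : ι → κ) (j : ι → ℝ) (k : κ) : ℝ :=
  ∑ i, if pr i = k then j i else 0

noncomputable def ent (j : ι → ℝ) : ℝ := -∑ i, j i * logb 2 (j i)

noncomputable def condEnt (pr : ι → κ) (j : ι → ℝ) : ℝ :=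
  ∑ i, j i * logb 2 (push pr j (pr i) / j i)

lemma push_nonneg {pr : ι → κ} {j : ι → ℝ} (hj : ∀ i, 0 ≤ j i) (k : κ) :
    0 ≤ push pr j k := by
  classical
  refine Finset.sum_nonneg fun i _ => ?_
  split <;> simp [hj i]

lemma le_push {pr : ι → κ} {j : ι → ℝ} (hj : ∀ i, 0 ≤ j i) (i : ι) :
    j i ≤ push pr j (pr i) := by
  classical
  have : j i = ∑ i' ∈ ({i} : Finset ι), if pr i' = pr i then j i' else 0 := by simp
  rw [push]
  rw [this]
  refine Finset.sum_le_sum_of_subset_of_nonneg (by simp) ?_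
  intro i' _ _
  split <;> simp [hj i']

lemma sum_push_mul {pr : ι → κ} {j : ι → ℝ} (c : κ → ℝ) :
    ∑ k, push pr j k * c k = ∑ i, j i * c (pr i) := by
  classical
  unfold push
  simp only [Finset.sum_mul, ite_mul, zero_mul]
  rw [Finset.sum_comm]
  refine Finset.sum_congr rfl fun i _ => ?_
  rw [Finset.sum_ite_eq Finset.univ (pr i) (fun k => j i * c k)]
  simp

lemma sum_push {pr : ι → κ} {j : ι → ℝ} : ∑ k, push pr j k = ∑ i, j i := by
  have := sum_push_mul (pr := pr) (j := j) (fun _ => (1:ℝ))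
  simpa using this


lemma push_push {Φ : ι → ι'} {σ : ι' → κ} {j : ι → ℝ} :
    push σ (push Φ j) = push (fun i => σ (Φ i)) j := by
  classical
  funext k
  unfold push
  have hsplit : ∀ (c : Prop) [Decidable c] (f : ι → ℝ),
      (if c then ∑ i, f i else 0) = ∑ i, if c then f i else 0 := by
    intros c _ f; split <;> simp
  simp only [hsplit]
  rw [Finset.sum_comm]
  refine Finset.sum_congr rfl fun i _ => ?_
  have : ∀ i' : ι', (if σ i' = k then if Φ i = i' then j i else 0 else 0)
      = if Φ i = i' then (if σ i' = k then j i else 0) else 0 := by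
    intro i'; split <;> split <;> simp_all
  simp only [this]
  rw [Finset.sum_ite_eq Finset.univ (Φ i) (fun i' => if σ i' = k then j i else 0)]
  simp

lemma push_eq_sum {ρ : Type*} [Fintype ρ] (e : ι ≃ κ × ρ) (j : ι → ℝ) (k : κ) :
    push (fun i => (e i).1) j k = ∑ r : ρ, j (e.symm (k, r)) := by
  classical
  unfold push
  rw [← Equiv.sum_comp e.symm (fun i => if (e i).1 = k then j i else 0)]
  simp only [Equiv.apply_symm_apply]
  rw [Fintype.sum_prod_type]
  rw [Finset.sum_eq_single k]
  · simp
  · intro b _ hb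
    refine Finset.sum_eq_zero fun r _ => by simp [hb]
  · simp

lemma condEnt_term_nonneg {pr : ι → κ} {j : ι → ℝ} (hj : ∀ i, 0 ≤ j i) (i : ι) :
    0 ≤ j i * logb 2 (push pr j (pr i) / j i) := by
  rcases eq_or_lt_of_le (hj i) with h | h
  · simp [← h]
  · refine mul_nonneg (hj i) (Real.logb_nonneg one_lt_two ?_)
    rw [le_div_iff₀ h]
    simpa using le_push hj i

lemma ent_eq_push_add_condEnt (pr : ι → κ) (j : ι → ℝ) (hj : ∀ i, 0 ≤ j i) :
    ent j = ent (push pr j) + condEnt pr j := by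
  unfold ent condEnt
  rw [sum_push_mul (fun k => logb 2 (push pr j k))]
  have key : ∀ i ∈ Finset.univ, j i * logb 2 (push pr j (pr i) / j i)
      = j i * logb 2 (push pr j (pr i)) - j i * logb 2 (j i) := by
    intro i _
    rcases eq_or_lt_of_le (hj i) with h | h
    · simp [← h]
    · have hp : 0 < push pr j (pr i) := lt_of_lt_of_le h (le_push hj i)
      rw [Real.logb_div (ne_of_gt hp) (ne_of_gt h)]
      ring
  rw [Finset.sum_congr rfl key, Finset.sum_sub_distrib]
  ring

lemma logsum_log (p w : ι → ℝ) (hp : ∀ i, 0 ≤ p i) (hw : ∀ i, 0 ≤ w i)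
    (h0 : ∀ i, w i = 0 → p i = 0) :
    ∑ i, p i * Real.log (w i / p i) ≤ (∑ i, p i) * Real.log ((∑ i, w i) / (∑ i, p i)) := by
  classical
  set S := ∑ i, p i with hS
  rcases eq_or_lt_of_le (Finset.sum_nonneg (fun i (_ : i ∈ Finset.univ) => hp i)) with h | hSpos
  · have hz : ∀ i ∈ Finset.univ, p i = 0 :=
      (Finset.sum_eq_zero_iff_of_nonneg (fun i _ => hp i)).1 h.symm
    have : ∑ i, p i * Real.log (w i / p i) = 0 :=
      Finset.sum_eq_zero fun i hi => by simp [hz i hi]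
    rw [this, hS, ← h]
    simp
  · set t := Finset.univ.filter (fun i => p i ≠ 0) with ht
    have hSpos' : (0:ℝ) < S := by rw [hS]; exact hSpos
    have hpt : ∀ i ∈ t, 0 < p i := fun i hi =>
      lt_of_le_of_ne (hp i) (Ne.symm (Finset.mem_filter.1 hi).2)
    have hwt : ∀ i ∈ t, 0 < w i := fun i hi =>
      lt_of_le_of_ne (hw i) (fun e => (Finset.mem_filter.1 hi).2 (h0 i e.symm))
    have hsum_t : ∑ i ∈ t, p i = S := Finset.sum_filter_ne_zero Finset.univ
    have htne : t.Nonempty := by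
      by_contra hne
      rw [Finset.not_nonempty_iff_eq_empty] at hne
      rw [hne, Finset.sum_empty] at hsum_t
      have h1 : (0:ℝ) < S := by rw [hS]; exact hSpos
      exact lt_irrefl _ (h1.trans_le (le_of_eq hsum_t.symm))
    have jensen := (strictConcaveOn_log_Ioi.concaveOn).le_map_sum
      (t := t) (w := fun i => p i / S) (p := fun i => w i / p i)
      (fun i _ => div_nonneg (hp i) (le_of_lt hSpos'))
      (by rw [← Finset.sum_div, hsum_t, div_self (ne_of_gt hSpos')])
      (fun i hi => Set.mem_Ioi.2 (div_pos (hwt i hi) (hpt i hi)))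
    simp only [smul_eq_mul] at jensen
    have hrw : ∑ i ∈ t, p i / S * (w i / p i) = (∑ i ∈ t, w i) / S := by
      rw [Finset.sum_div]
      refine Finset.sum_congr rfl fun i hi => ?_
      rw [div_mul_div_comm, mul_comm (p i) (w i), mul_div_mul_right _ _ (ne_of_gt (hpt i hi))]
    rw [hrw] at jensen
    have hWt : 0 < ∑ i ∈ t, w i := by
      obtain ⟨i0, hi0⟩ := htne
      exact lt_of_lt_of_le (hwt i0 hi0)
        (Finset.single_le_sum (fun i hi => le_of_lt (hwt i hi)) hi0)
    have hWle : (∑ i ∈ t, w i) ≤ ∑ i, w i :=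
      Finset.sum_le_sum_of_subset_of_nonneg (Finset.filter_subset _ _) (fun i _ _ => hw i)
    have hlog2 : Real.log ((∑ i ∈ t, w i) / S) ≤ Real.log ((∑ i, w i) / S) :=
      Real.log_le_log (div_pos hWt hSpos') (div_le_div_of_nonneg_right hWle hSpos'.le)
    have hLHS : ∑ i, p i * Real.log (w i / p i) = ∑ i ∈ t, p i * Real.log (w i / p i) := by
      symm
      refine Finset.sum_filter_of_ne fun i _ hne => ?_
      intro hp0
      exact hne (by rw [hp0, zero_mul])
    have hmulsum : ∑ i ∈ t, p i / S * Real.log (w i / p i)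
        = (∑ i ∈ t, p i * Real.log (w i / p i)) / S := by
      rw [Finset.sum_div]
      refine Finset.sum_congr rfl fun i hi => ?_
      ring
    rw [hmulsum] at jensen
    have := le_trans jensen hlog2
    rw [div_le_iff₀ hSpos'] at this
    rw [hLHS]
    calc ∑ i ∈ t, p i * Real.log (w i / p i)
        ≤ Real.log ((∑ i, w i) / S) * S := this
      _ = S * Real.log ((∑ i, w i) / S) := by ring

lemma logsum (p w : ι → ℝ) (hp : ∀ i, 0 ≤ p i) (hw : ∀ i, 0 ≤ w i)
    (h0 : ∀ i, w i = 0 → p i = 0) :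
    ∑ i, p i * logb 2 (w i / p i) ≤ (∑ i, p i) * logb 2 ((∑ i, w i) / (∑ i, p i)) := by
  have h := logsum_log p w hp hw h0
  have hl2 : (0:ℝ) < Real.log 2 := Real.log_pos one_lt_two
  simp only [Real.logb, ← mul_div_assoc]
  rw [← Finset.sum_div]
  exact div_le_div_of_nonneg_right h hl2.le

lemma maxent (x : ι → ℝ) (hx : ∀ i, 0 ≤ x i) :
    ∑ i, x i * logb 2 ((∑ i', x i') / x i) ≤ (∑ i, x i) * logb 2 (Fintype.card ι) := by
  classical
  rcases isEmpty_or_nonempty ι with hE | hNE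
  · simp
  set S := ∑ i, x i with hS
  rcases eq_or_lt_of_le (Finset.sum_nonneg fun i (_ : i ∈ Finset.univ) => hx i) with h0 | hSpos
  · have hz : ∀ i ∈ Finset.univ, x i = 0 :=
      (Finset.sum_eq_zero_iff_of_nonneg fun i _ => hx i).1 h0.symm
    have l : ∑ i, x i * logb 2 (S / x i) = 0 :=
      Finset.sum_eq_zero fun i hi => by simp [hz i hi]
    rw [l, hS, ← h0]
    simp
  · have hSpos' : (0:ℝ) < S := by rw [hS]; exact hSpos
    have hc : (0:ℝ) < (Fintype.card ι : ℝ) := by exact_mod_cast Fintype.card_pos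
    have key := logsum x (fun _ => S / (Fintype.card ι : ℝ)) hx
      (fun _ => div_nonneg hSpos'.le hc.le)
      (fun i hw => absurd hw (div_ne_zero (ne_of_gt hSpos') (ne_of_gt hc)))
    have hsumw : ∑ _i : ι, S / (Fintype.card ι : ℝ) = S := by
      rw [Finset.sum_const, Finset.card_univ, nsmul_eq_mul, mul_div_cancel₀ _ (ne_of_gt hc)]
    rw [hsumw, ← hS, div_self (ne_of_gt hSpos'), Real.logb_one, mul_zero] at key
    have split : ∀ i ∈ Finset.univ, x i * logb 2 (S / x i)
        = x i * logb 2 ((S / (Fintype.card ι : ℝ)) / x i) + x i * logb 2 (Fintype.card ι) := by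
      intro i _
      rcases eq_or_lt_of_le (hx i) with h | h
      · simp [← h]
      · have e : (S / (Fintype.card ι : ℝ)) / x i = (S / x i) / (Fintype.card ι : ℝ) := by
          ring
        rw [e, Real.logb_div (div_ne_zero (ne_of_gt hSpos') (ne_of_gt h)) (ne_of_gt hc)]
        ring
    rw [Finset.sum_congr rfl split, Finset.sum_add_distrib, ← Finset.sum_mul]
    nlinarith [key]

lemma condEnt_push_le (j : ι → ℝ) (hj : ∀ i, 0 ≤ j i) (Φ : ι → ι') (pr' : ι' → κ) :
    condEnt pr' (push Φ j) ≤ condEnt (fun i => pr' (Φ i)) j := by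
  unfold condEnt
  rw [push_push]
  rw [sum_push_mul (fun i' => logb 2 (push (fun i => pr' (Φ i)) j (pr' i') / push Φ j i'))]
  refine Finset.sum_le_sum fun i _ => ?_
  rcases eq_or_lt_of_le (hj i) with h | h
  · simp [← h]
  · refine mul_le_mul_of_nonneg_left ?_ (hj i)
    have h1 : 0 < push Φ j (Φ i) := lt_of_lt_of_le h (le_push hj i)
    have h2 : push Φ j (Φ i) ≤ push (fun i => pr' (Φ i)) j (pr' (Φ i)) := by
      have := le_push (pr := pr') (j := push Φ j) (push_nonneg hj) (Φ i)
      rwa [push_push] at this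
    have hnum : 0 ≤ push (fun i => pr' (Φ i)) j (pr' (Φ i)) := (lt_of_lt_of_le h1 h2).le
    have hratio : push (fun i => pr' (Φ i)) j (pr' (Φ i)) / push Φ j (Φ i)
        ≤ push (fun i => pr' (Φ i)) j (pr' (Φ i)) / j i := by
      gcongr
      exact le_push hj i
    exact Real.logb_le_logb_of_le one_lt_two (div_pos (lt_of_lt_of_le h1 h2) h1) hratio

lemma condEnt_comp (pr : ι → κ) (τ : κ → κ') (j : ι → ℝ) (hj : ∀ i, 0 ≤ j i) :
    condEnt (fun i => τ (pr i)) j = condEnt pr j + condEnt τ (push pr j) := by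
  unfold condEnt
  rw [push_push]
  rw [sum_push_mul (fun k => logb 2 (push (fun i => τ (pr i)) j (τ k) / push pr j k))]
  rw [← Finset.sum_add_distrib]
  refine Finset.sum_congr rfl fun i _ => ?_
  rcases eq_or_lt_of_le (hj i) with h | h
  · simp [← h]
  · have h1 : 0 < push pr j (pr i) := lt_of_lt_of_le h (le_push hj i)
    have h2 : 0 < push (fun i => τ (pr i)) j (τ (pr i)) := lt_of_lt_of_le h (le_push hj i)
    rw [Real.logb_div (ne_of_gt h2) (ne_of_gt h), Real.logb_div (ne_of_gt h1) (ne_of_gt h),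
      Real.logb_div (ne_of_gt h2) (ne_of_gt h1)]
    ring

lemma condEnt_le_of_inj (j : ι → ℝ) (hj : ∀ i, 0 ≤ j i)
    (pr : ι → κ) (Φ : ι → ι') (pr' : ι' → κ') (τ : κ → κ')
    (hcomm : ∀ i, pr' (Φ i) = τ (pr i))
    (hinj : Function.Injective (fun i => (Φ i, pr i))) :
    condEnt pr j ≤ condEnt pr' (push Φ j) := by
  classical
  set J' := push Φ j with hJ'
  set mp := push pr j with hmp
  set m' := push (fun i => τ (pr i)) j with hm'
  have hfun : (fun i => pr' (Φ i)) = fun i => τ (pr i) := funext hcomm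
  have hcomp : push pr' J' = m' := by
    rw [hJ', push_push, hfun, hm']
  have hJ'nn : ∀ i', 0 ≤ J' i' := push_nonneg hj
  have hmpnn : ∀ k, 0 ≤ mp k := push_nonneg hj
  have hm'nn : ∀ k', 0 ≤ m' k' := push_nonneg hj
  have hleJ' : ∀ i, j i ≤ J' (Φ i) := le_push hj
  have hlemp : ∀ i, j i ≤ mp (pr i) := le_push hj
  have hlem' : ∀ i, j i ≤ m' (τ (pr i)) := le_push (pr := fun i => τ (pr i)) hj
  have hJ'le : ∀ i', J' i' ≤ m' (pr' i') := by
    intro i'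
    have := le_push (pr := pr') (j := J') hJ'nn i'
    rwa [hcomp] at this
  set w : ι → ℝ := fun i =>
    if m' (τ (pr i)) = 0 then 0 else J' (Φ i) * mp (pr i) / m' (τ (pr i)) with hwdef
  have hwnn : ∀ i, 0 ≤ w i := by
    intro i
    rw [hwdef]
    dsimp only
    split
    · exact le_refl 0
    · exact div_nonneg (mul_nonneg (hJ'nn _) (hmpnn _)) (hm'nn _)
  have hw0 : ∀ i, w i = 0 → j i = 0 := by
    intro i h0
    rw [hwdef] at h0
    dsimp only at h0
    by_cases hz : m' (τ (pr i)) = 0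
    · exact le_antisymm (hz ▸ hlem' i) (hj i)
    · rw [if_neg hz] at h0
      rcases mul_eq_zero.1 ((div_eq_zero_iff.1 h0).resolve_right hz) with h1 | h1
      · exact le_antisymm (h1 ▸ hleJ' i) (hj i)
      · exact le_antisymm (h1 ▸ hlemp i) (hj i)
  have hexp : condEnt pr' J' = ∑ i, j i * logb 2 (m' (pr' (Φ i)) / J' (Φ i)) := by
    unfold condEnt
    rw [hcomp, hJ']
    exact sum_push_mul (fun i' => logb 2 (m' (pr' i') / J' i'))
  have hkey : ∀ i ∈ Finset.univ, j i * logb 2 (w i / j i)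
      = j i * logb 2 (mp (pr i) / j i) - j i * logb 2 (m' (pr' (Φ i)) / J' (Φ i)) := by
    intro i _
    rcases eq_or_lt_of_le (hj i) with h | h
    · simp [← h]
    · have hJp : 0 < J' (Φ i) := lt_of_lt_of_le h (hleJ' i)
      have hmpp : 0 < mp (pr i) := lt_of_lt_of_le h (hlemp i)
      have hm'p : 0 < m' (τ (pr i)) := lt_of_lt_of_le h (hlem' i)
      rw [hcomm i, hwdef]
      dsimp only
      rw [if_neg (ne_of_gt hm'p)]
      rw [Real.logb_div (ne_of_gt (div_pos (mul_pos hJp hmpp) hm'p)) (ne_of_gt h),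
        Real.logb_div (ne_of_gt (mul_pos hJp hmpp)) (ne_of_gt hm'p),
        Real.logb_mul (ne_of_gt hJp) (ne_of_gt hmpp),
        Real.logb_div (ne_of_gt hmpp) (ne_of_gt h),
        Real.logb_div (ne_of_gt hm'p) (ne_of_gt hJp)]
      ring
  have hdiff : ∑ i, j i * logb 2 (w i / j i) = condEnt pr j - condEnt pr' J' := by
    rw [Finset.sum_congr rfl hkey, Finset.sum_sub_distrib, hexp]
    rfl
  have hls := logsum j w hj hwnn hw0
  have hsw : ∑ i, w i ≤ ∑ i, j i := by
    set W : ι' × κ → ℝ := fun p =>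
      if τ p.2 = pr' p.1 then
        (if m' (τ p.2) = 0 then 0 else J' p.1 * mp p.2 / m' (τ p.2)) else 0 with hWdef
    have hWnn : ∀ p, 0 ≤ W p := by
      intro p
      rw [hWdef]
      dsimp only
      split
      · split
        · exact le_refl 0
        · exact div_nonneg (mul_nonneg (hJ'nn _) (hmpnn _)) (hm'nn _)
      · exact le_refl 0
    have hw_eq : ∀ i, w i = W (Φ i, pr i) := by
      intro i
      rw [hWdef, hwdef]
      dsimp only
      rw [if_pos (hcomm i).symm]
    calc ∑ i, w i = ∑ i, W (Φ i, pr i) := Finset.sum_congr rfl fun i _ => hw_eq i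
      _ = ∑ p ∈ Finset.univ.image (fun i => (Φ i, pr i)), W p :=
          (Finset.sum_image (fun a _ b _ h => hinj h)).symm
      _ ≤ ∑ p : ι' × κ, W p :=
          Finset.sum_le_sum_of_subset_of_nonneg (Finset.subset_univ _) (fun p _ _ => hWnn p)
      _ = ∑ i', J' i' := by
          rw [Fintype.sum_prod_type]
          refine Finset.sum_congr rfl fun i' _ => ?_
          by_cases hz : m' (pr' i') = 0
          · have hJ0 : J' i' = 0 := le_antisymm (hz ▸ hJ'le i') (hJ'nn i')
            rw [hJ0]
            refine Finset.sum_eq_zero fun k _ => ?_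
            rw [hWdef]
            dsimp only
            by_cases hτ : τ k = pr' i'
            · rw [if_pos hτ, hτ, if_pos hz]
            · rw [if_neg hτ]
          · have hterm : ∀ k, W (i', k)
                = (J' i' / m' (pr' i')) * (if τ k = pr' i' then mp k else 0) := by
              intro k
              rw [hWdef]
              dsimp only
              by_cases hτ : τ k = pr' i'
              · rw [if_pos hτ, if_pos hτ, hτ, if_neg hz]
                ring
              · rw [if_neg hτ, if_neg hτ, mul_zero]
            rw [Finset.sum_congr rfl fun k _ => hterm k, ← Finset.mul_sum]
            have hpτ : (∑ k, if τ k = pr' i' then mp k else 0) = m' (pr' i') := by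
              have h1 : (∑ k, if τ k = pr' i' then mp k else 0) = push τ mp (pr' i') := rfl
              rw [h1, hmp, push_push, ← hm']
            rw [hpτ, div_mul_cancel₀ _ hz]
      _ = ∑ i, j i := by rw [hJ']; exact sum_push
  have hfin : (∑ i, j i) * logb 2 ((∑ i, w i) / (∑ i, j i)) ≤ 0 := by
    rcases eq_or_lt_of_le (Finset.sum_nonneg fun i (_ : i ∈ Finset.univ) => hj i) with h | hS
    · rw [← h, zero_mul]
    · refine mul_nonpos_of_nonneg_of_nonpos hS.le ?_
      refine Real.logb_nonpos one_lt_two (div_nonneg (Finset.sum_nonneg fun i _ => hwnn i) hS.le) ?_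
      rw [div_le_one hS]
      exact hsw
  linarith [hls, hfin, hdiff.symm.le, hdiff.le]

lemma push_fst {β γ : Type*} [Fintype β] [Fintype γ] (j : β × γ → ℝ) (a : β) :
    push Prod.fst j a = ∑ c, j (a, c) := by
  classical
  unfold push
  rw [Fintype.sum_prod_type]
  have : ∀ b : β, (∑ c : γ, if (b, c).1 = a then j (b, c) else 0)
      = if b = a then ∑ c : γ, j (b, c) else 0 := by
    intro b
    split <;> simp_all
  rw [Finset.sum_congr rfl fun b _ => this b]
  rw [Finset.sum_ite_eq' Finset.univ a (fun b => ∑ c : γ, j (b, c))]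
  simp

lemma push_snd {β γ : Type*} [Fintype β] [Fintype γ] (j : β × γ → ℝ) (c : γ) :
    push Prod.snd j c = ∑ b, j (b, c) := by
  classical
  unfold push
  rw [Fintype.sum_prod_type_right]
  have : ∀ d : γ, (∑ b : β, if (b, d).2 = c then j (b, d) else 0)
      = if d = c then ∑ b : β, j (b, d) else 0 := by
    intro d
    split <;> simp_all
  rw [Finset.sum_congr rfl fun d _ => this d]
  rw [Finset.sum_ite_eq' Finset.univ c (fun d => ∑ b : β, j (b, d))]
  simp

lemma binent_le {a b : ℝ} (ha : 0 ≤ a) (hab : a ≤ b) (hb : b ≤ 1/2) :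
    -a * logb 2 a - (1-a) * logb 2 (1-a) ≤ -b * logb 2 b - (1-b) * logb 2 (1-b) := by
  have h1 : ∀ x : ℝ, -x * logb 2 x - (1-x) * logb 2 (1-x) = Real.binEntropy x / Real.log 2 := by
    intro x
    rw [Real.binEntropy, Real.log_inv, Real.log_inv]
    simp only [Real.logb]
    ring
  rw [h1, h1]
  have hmem1 : a ∈ Set.Icc (0:ℝ) 2⁻¹ := ⟨ha, by linarith⟩
  have hmem2 : b ∈ Set.Icc (0:ℝ) 2⁻¹ := ⟨le_trans ha hab, by linarith⟩
  have hmono := Real.binEntropy_strictMonoOn.monotoneOn hmem1 hmem2 hab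
  exact div_le_div_of_nonneg_right hmono (Real.log_pos one_lt_two).le

end Stmt10

open Stmt10 in
lemma mutualInfo_eq {β γ : Type*} [Fintype β] [Fintype γ] (j : β × γ → ℝ)
    (hj : ∀ p, 0 ≤ j p) :
    mutualInfoBits j = ent (push Prod.fst j) - condEnt Prod.snd j := by
  unfold mutualInfoBits ent condEnt
  rw [sum_push_mul (fun a => Real.logb 2 (push Prod.fst j a))]
  have key : ∀ p ∈ Finset.univ, (if j p = 0 then 0
      else j p * Real.logb 2 (j p / ((∑ b, j (p.1, b)) * ∑ a, j (a, p.2))))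
      = -(j p * Real.logb 2 (push Prod.fst j p.1))
        - j p * Real.logb 2 (push Prod.snd j p.2 / j p) := by
    intro p _
    by_cases h0 : j p = 0
    · rw [if_pos h0, h0]
      simp
    · have hp : 0 < j p := lt_of_le_of_ne (hj p) (Ne.symm h0)
      have hm1 : 0 < push Prod.fst j p.1 := lt_of_lt_of_le hp (le_push hj p)
      have hm2 : 0 < push Prod.snd j p.2 := lt_of_lt_of_le hp (le_push hj p)
      rw [if_neg h0]
      rw [show (∑ b, j (p.1, b)) = push Prod.fst j p.1 from (push_fst j p.1).symm,
          show (∑ a, j (a, p.2)) = push Prod.snd j p.2 from (push_snd j p.2).symm]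
      rw [Real.logb_div h0 (ne_of_gt (mul_pos hm1 hm2)),
          Real.logb_mul (ne_of_gt hm1) (ne_of_gt hm2),
          Real.logb_div (ne_of_gt hm2) h0]
      ring
  rw [Finset.sum_congr rfl key, Finset.sum_sub_distrib]
  rw [Finset.sum_neg_distrib]



open Stmt10

/-- If `(M, M', B, V)` are jointly distributed, `B = 0` forces `M = M'`, and
`Pr[B = 1] ≤ δ ≤ 1/2`, then `I(V; M) ≤ I(V; M') + δ·log₂|𝒱| + H₂(δ)`. -/
theorem stmt_10 {α 𝒱 : Type*} [Fintype α] [Fintype 𝒱]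
    (q : α × α × Bool × 𝒱 → ℝ) (hq : IsDist q)
    (heq : ∀ m m' v, q (m, m', false, v) ≠ 0 → m = m')
    (δ : ℝ) (hδ0 : 0 ≤ δ) (hδhalf : δ ≤ 1 / 2)
    (hB : (∑ m, ∑ m', ∑ v, q (m, m', true, v)) ≤ δ) :
    mutualInfoBits (fun p : 𝒱 × α => ∑ m', ∑ b, q (p.2, m', b, p.1)) ≤
      mutualInfoBits (fun p : 𝒱 × α => ∑ m, ∑ b, q (m, p.2, b, p.1)) +
        δ * Real.logb 2 (Fintype.card 𝒱) +
        (-δ * Real.logb 2 δ - (1 - δ) * Real.logb 2 (1 - δ)) := by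
  classical
  obtain ⟨hqnn, hqsum⟩ := hq
  set jm : 𝒱 × α → ℝ := push (fun x : α × α × Bool × 𝒱 => (x.2.2.2, x.1)) q with hjm
  set jm' : 𝒱 × α → ℝ := push (fun x : α × α × Bool × 𝒱 => (x.2.2.2, x.2.1)) q with hjm'
  set t' : 𝒱 × Bool × α → ℝ :=
    push (fun x : α × α × Bool × 𝒱 => (x.2.2.2, x.2.2.1, x.2.1)) q with ht'
  set r : 𝒱 × Bool × α → ℝ :=
    push (fun x : α × α × Bool × 𝒱 => (x.2.2.2, x.2.2.1, x.1)) q with hr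
  set u : Bool × α → ℝ := push (Prod.snd : 𝒱 × Bool × α → Bool × α) t' with hu
  set ρ : Bool × α → ℝ := push (Prod.snd : 𝒱 × Bool × α → Bool × α) r with hρ
  set pB : Bool → ℝ := push (Prod.fst : Bool × α → Bool) u with hpB
  have hjmnn : ∀ p, 0 ≤ jm p := push_nonneg hqnn
  have hjm'nn : ∀ p, 0 ≤ jm' p := push_nonneg hqnn
  have ht'nn : ∀ x, 0 ≤ t' x := push_nonneg hqnn
  have hrnn : ∀ x, 0 ≤ r x := push_nonneg hqnn
  have hunn : ∀ p, 0 ≤ u p := push_nonneg ht'nn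
  have hρnn : ∀ p, 0 ≤ ρ p := push_nonneg hrnn
  have hpBnn : ∀ b, 0 ≤ pB b := push_nonneg hunn
  -- evaluation of the marginals as explicit sums
  have hjm_eval : ∀ p : 𝒱 × α, jm p = ∑ m', ∑ b, q (p.2, m', b, p.1) := by
    intro p
    have h := push_eq_sum (⟨fun x => ((x.2.2.2, x.1), (x.2.1, x.2.2.1)),
      fun y => (y.1.2, y.2.1, y.2.2, y.1.1), fun _ => rfl, fun _ => rfl⟩ :
      (α × α × Bool × 𝒱) ≃ (𝒱 × α) × (α × Bool)) q p
    rw [Fintype.sum_prod_type] at h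
    exact h
  have hjm'_eval : ∀ p : 𝒱 × α, jm' p = ∑ m, ∑ b, q (m, p.2, b, p.1) := by
    intro p
    have h := push_eq_sum (⟨fun x => ((x.2.2.2, x.2.1), (x.1, x.2.2.1)),
      fun y => (y.2.1, y.1.2, y.2.2, y.1.1), fun _ => rfl, fun _ => rfl⟩ :
      (α × α × Bool × 𝒱) ≃ (𝒱 × α) × (α × Bool)) q p
    rw [Fintype.sum_prod_type] at h
    exact h
  have ht'_eval : ∀ k : 𝒱 × Bool × α, t' k = ∑ m, q (m, k.2.2, k.2.1, k.1) := by
    intro k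
    exact push_eq_sum (⟨fun x => ((x.2.2.2, x.2.2.1, x.2.1), x.1),
      fun y => (y.2, y.1.2.2, y.1.2.1, y.1.1), fun _ => rfl, fun _ => rfl⟩ :
      (α × α × Bool × 𝒱) ≃ (𝒱 × Bool × α) × α) q k
  have hr_eval : ∀ k : 𝒱 × Bool × α, r k = ∑ m', q (k.2.2, m', k.2.1, k.1) := by
    intro k
    exact push_eq_sum (⟨fun x => ((x.2.2.2, x.2.2.1, x.1), x.2.1),
      fun y => (y.1.2.2, y.2, y.1.2.1, y.1.1), fun _ => rfl, fun _ => rfl⟩ :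
      (α × α × Bool × 𝒱) ≃ (𝒱 × Bool × α) × α) q k
  have hu_eval : ∀ p : Bool × α, u p = ∑ v, t' (v, p) := by
    intro p
    exact push_eq_sum (⟨fun x => (x.2, x.1), fun y => (y.2, y.1),
      fun _ => rfl, fun _ => rfl⟩ : (𝒱 × Bool × α) ≃ (Bool × α) × 𝒱) t' p
  have hρ_eval : ∀ p : Bool × α, ρ p = ∑ v, r (v, p) := by
    intro p
    exact push_eq_sum (⟨fun x => (x.2, x.1), fun y => (y.2, y.1),
      fun _ => rfl, fun _ => rfl⟩ : (𝒱 × Bool × α) ≃ (Bool × α) × 𝒱) r p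
  -- diagonal facts via heq
  have ht'f : ∀ (v : 𝒱) (m' : α), t' (v, false, m') = q (m', m', false, v) := by
    intro v m'
    rw [ht'_eval (v, false, m')]
    refine Finset.sum_eq_single m' (fun m _ hne => ?_) (fun h => absurd (Finset.mem_univ _) h)
    by_contra h0
    exact hne (heq m m' v h0)
  have hrf : ∀ (v : 𝒱) (m : α), r (v, false, m) = q (m, m, false, v) := by
    intro v m
    rw [hr_eval (v, false, m)]
    refine Finset.sum_eq_single m (fun m' _ hne => ?_) (fun h => absurd (Finset.mem_univ _) h)
    by_contra h0
    exact hne (heq m m' v h0).symm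
  have htr : ∀ (v : 𝒱) (m : α), t' (v, false, m) = r (v, false, m) := by
    intro v m
    rw [ht'f, hrf]
  have huρ : ∀ m : α, u (false, m) = ρ (false, m) := by
    intro m
    rw [hu_eval, hρ_eval]
    exact Finset.sum_congr rfl fun v _ => htr v m
  -- pB facts
  have hpBsum : pB true + pB false = 1 := by
    have h1 : ∑ b, pB b = ∑ x, q x := by
      calc ∑ b, pB b = ∑ p : Bool × α, u p := sum_push
        _ = ∑ x : 𝒱 × Bool × α, t' x := sum_push
        _ = ∑ x, q x := sum_push
    rw [hqsum] at h1
    rw [← h1, Fintype.sum_bool]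
  have hpBtrue : pB true = ∑ m, ∑ m', ∑ v, q (m, m', true, v) := by
    have h1 : pB true = ∑ a, u (true, a) := push_fst u true
    have h2 : pB true = ∑ a : α, ∑ v : 𝒱, ∑ m : α, q (m, a, true, v) := by
      rw [h1]
      refine Finset.sum_congr rfl fun a _ => ?_
      rw [hu_eval (true, a)]
      exact Finset.sum_congr rfl fun v _ => ht'_eval (v, true, a)
    rw [h2]
    calc ∑ a : α, ∑ v : 𝒱, ∑ m : α, q (m, a, true, v)
        = ∑ a : α, ∑ m : α, ∑ v : 𝒱, q (m, a, true, v) :=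
          Finset.sum_congr rfl fun a _ => Finset.sum_comm
      _ = ∑ m : α, ∑ a : α, ∑ v : 𝒱, q (m, a, true, v) := Finset.sum_comm
  have hpBtrue_le : pB true ≤ δ := by rw [hpBtrue]; exact hB
  -- nonemptiness
  have hne4 : Nonempty (α × α × Bool × 𝒱) := by
    by_contra h
    rw [not_nonempty_iff] at h
    rw [Finset.univ_eq_empty, Finset.sum_empty] at hqsum
    norm_num at hqsum
  have hneV : Nonempty 𝒱 := ⟨hne4.some.2.2.2⟩
  have hL : (0:ℝ) ≤ Real.logb 2 (Fintype.card 𝒱) := by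
    refine Real.logb_nonneg one_lt_two ?_
    have : 1 ≤ Fintype.card 𝒱 := Fintype.card_pos
    exact_mod_cast this
  -- Step A3 : H(B|M') ≤ H2(δ)
  have hA3 : condEnt (Prod.snd : Bool × α → α) u
      ≤ -δ * Real.logb 2 δ - (1 - δ) * Real.logb 2 (1 - δ) := by
    have g3 := condEnt_le_of_inj u hunn (Prod.snd : Bool × α → α)
      (Prod.fst : Bool × α → Bool) (fun _ : Bool => ()) (fun _ : α => ())
      (fun _ => rfl)
      (fun a b h => by
        have h1 : a.1 = b.1 := congrArg (fun p => p.1) h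
        have h2 : a.2 = b.2 := congrArg (fun p => p.2) h
        exact Prod.ext h1 h2)
    have heval : condEnt (fun _ : Bool => ()) pB
        = -(pB true) * Real.logb 2 (pB true)
          - (1 - pB true) * Real.logb 2 (1 - pB true) := by
      unfold condEnt
      have hpu : push (fun _ : Bool => ()) pB () = 1 := by
        have h : push (fun _ : Bool => ()) pB () = ∑ b, pB b := by
          unfold push
          simp
        rw [h, Fintype.sum_bool]
        linarith
      have h1 : ∀ b : Bool, pB b * Real.logb 2 (push (fun _ : Bool => ()) pB () / pB b)
          = pB b * Real.logb 2 (1 / pB b) := fun b => by rw [hpu]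
      calc ∑ b : Bool, pB b * Real.logb 2 (push (fun _ : Bool => ()) pB ((fun _ : Bool => ()) b) / pB b)
          = ∑ b : Bool, pB b * Real.logb 2 (1 / pB b) :=
            Finset.sum_congr rfl fun b _ => h1 b
        _ = pB true * Real.logb 2 (1 / pB true) + pB false * Real.logb 2 (1 / pB false) :=
            Fintype.sum_bool _
        _ = -(pB true) * Real.logb 2 (pB true) - (1 - pB true) * Real.logb 2 (1 - pB true) := by
            have hf : pB false = 1 - pB true := by linarith
            rw [hf, one_div, one_div, Real.logb_inv, Real.logb_inv]
            ring
    have hbin : -(pB true) * Real.logb 2 (pB true) - (1 - pB true) * Real.logb 2 (1 - pB true)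
        ≤ -δ * Real.logb 2 δ - (1 - δ) * Real.logb 2 (1 - δ) :=
      binent_le (hpBnn true) hpBtrue_le hδhalf
    calc condEnt (Prod.snd : Bool × α → α) u
        ≤ condEnt (fun _ : Bool => ()) pB := g3
      _ ≤ _ := heval.le.trans hbin
  -- splitting sums over the Bool coordinate
  have hsplit : ∀ s : 𝒱 × Bool × α → ℝ, (∑ x, s x)
      = (∑ v, ∑ m, s (v, false, m)) + (∑ v, ∑ m, s (v, true, m)) := by
    intro s
    rw [Fintype.sum_prod_type]
    have h : ∀ v, (∑ p : Bool × α, s (v, p))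
        = (∑ m, s (v, false, m)) + (∑ m, s (v, true, m)) := by
      intro v
      rw [Fintype.sum_prod_type, Fintype.sum_bool]
      exact add_comm _ _
    rw [Finset.sum_congr rfl fun v _ => h v, Finset.sum_add_distrib]
  have hCsplit : condEnt (Prod.snd : 𝒱 × Bool × α → Bool × α) t'
      = (∑ v, ∑ m, t' (v, false, m) * Real.logb 2 (u (false, m) / t' (v, false, m)))
        + (∑ v, ∑ m, t' (v, true, m) * Real.logb 2 (u (true, m) / t' (v, true, m))) :=
    hsplit (fun x => t' x * Real.logb 2 (u x.2 / t' x))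
  have hDsplit : condEnt (Prod.snd : 𝒱 × Bool × α → Bool × α) r
      = (∑ v, ∑ m, r (v, false, m) * Real.logb 2 (ρ (false, m) / r (v, false, m)))
        + (∑ v, ∑ m, r (v, true, m) * Real.logb 2 (ρ (true, m) / r (v, true, m))) :=
    hsplit (fun x => r x * Real.logb 2 (ρ x.2 / r x))
  -- C1 : the B = 1 part is at most pB(1)·log|𝒱|
  have hC1 : (∑ v, ∑ m, t' (v, true, m) * Real.logb 2 (u (true, m) / t' (v, true, m)))
      ≤ pB true * Real.logb 2 (Fintype.card 𝒱) := by
    rw [Finset.sum_comm]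
    have hm : ∀ m : α, (∑ v, t' (v, true, m) * Real.logb 2 (u (true, m) / t' (v, true, m)))
        ≤ u (true, m) * Real.logb 2 (Fintype.card 𝒱) := by
      intro m
      have hx := maxent (fun v => t' (v, true, m)) (fun v => ht'nn _)
      rw [show (∑ v, t' (v, true, m)) = u (true, m) from (hu_eval (true, m)).symm] at hx
      exact hx
    calc ∑ m : α, ∑ v, t' (v, true, m) * Real.logb 2 (u (true, m) / t' (v, true, m))
        ≤ ∑ m : α, u (true, m) * Real.logb 2 (Fintype.card 𝒱) := Finset.sum_le_sum fun m _ => hm m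
      _ = (∑ m : α, u (true, m)) * Real.logb 2 (Fintype.card 𝒱) := (Finset.sum_mul _ _ _).symm
      _ = pB true * Real.logb 2 (Fintype.card 𝒱) := by
          rw [show pB true = ∑ a, u (true, a) from push_fst u true]
  -- C0 : the B = 0 part is at most H(V | M, B)
  have hC0 : (∑ v, ∑ m, t' (v, false, m) * Real.logb 2 (u (false, m) / t' (v, false, m)))
      ≤ condEnt (Prod.snd : 𝒱 × Bool × α → Bool × α) r := by
    have hterm : ∀ (v : 𝒱) (m : α),
        t' (v, false, m) * Real.logb 2 (u (false, m) / t' (v, false, m))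
        = r (v, false, m) * Real.logb 2 (ρ (false, m) / r (v, false, m)) := by
      intro v m
      rw [htr, huρ]
    rw [Finset.sum_congr rfl fun v _ => Finset.sum_congr rfl fun m _ => hterm v m, hDsplit]
    have hpos : 0 ≤ ∑ v, ∑ m, r (v, true, m) * Real.logb 2 (ρ (true, m) / r (v, true, m)) :=
      Finset.sum_nonneg fun v _ => Finset.sum_nonneg fun m _ =>
        condEnt_term_nonneg hrnn (v, true, m)
    linarith
  -- A5 : H(V | M, B) ≤ H(V | M)
  have hA5 : condEnt (Prod.snd : 𝒱 × Bool × α → Bool × α) r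
      ≤ condEnt (Prod.snd : 𝒱 × α → α) jm := by
    have g3 := condEnt_le_of_inj r hrnn (Prod.snd : 𝒱 × Bool × α → Bool × α)
      (fun x : 𝒱 × Bool × α => (x.1, x.2.2)) (Prod.snd : 𝒱 × α → α)
      (Prod.snd : Bool × α → α) (fun _ => rfl)
      (fun a b h => by
        have h1 : a.1 = b.1 := congrArg (fun p => p.1.1) h
        have h2 : a.2 = b.2 := congrArg (fun p => p.2) h
        exact Prod.ext h1 h2)
    have hpush : push (fun x : 𝒱 × Bool × α => (x.1, x.2.2)) r = jm := by
      rw [hr, push_push]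
    rwa [hpush] at g3
  -- A1 : H(V | M') ≤ H(V, B | M')
  have hA1 : condEnt (Prod.snd : 𝒱 × α → α) jm'
      ≤ condEnt (fun i : 𝒱 × Bool × α => Prod.snd (Prod.snd i)) t' := by
    have hpush : push (fun x : 𝒱 × Bool × α => (x.1, x.2.2)) t' = jm' := by
      rw [ht', push_push]
    have h := condEnt_push_le t' ht'nn (fun x : 𝒱 × Bool × α => (x.1, x.2.2))
      (Prod.snd : 𝒱 × α → α)
    rw [hpush] at h
    exact h
  -- A2 : chain rule
  have hA2 := condEnt_comp (Prod.snd : 𝒱 × Bool × α → Bool × α)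
    (Prod.snd : Bool × α → α) t' ht'nn
  rw [← hu] at hA2
  -- main chain
  have hmain : condEnt (Prod.snd : 𝒱 × α → α) jm'
      ≤ condEnt (Prod.snd : 𝒱 × α → α) jm + δ * Real.logb 2 (Fintype.card 𝒱)
        + (-δ * Real.logb 2 δ - (1 - δ) * Real.logb 2 (1 - δ)) := by
    have hδL : pB true * Real.logb 2 (Fintype.card 𝒱) ≤ δ * Real.logb 2 (Fintype.card 𝒱) :=
      mul_le_mul_of_nonneg_right hpBtrue_le hL
    linarith [hA1, hA2, hA3, hCsplit, hC1, hC0, hA5, hδL]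
  -- convert the goal
  rw [show (fun p : 𝒱 × α => ∑ m', ∑ b, q (p.2, m', b, p.1)) = jm from (funext hjm_eval).symm,
      show (fun p : 𝒱 × α => ∑ m, ∑ b, q (m, p.2, b, p.1)) = jm' from (funext hjm'_eval).symm]
  rw [mutualInfo_eq jm hjmnn, mutualInfo_eq jm' hjm'nn]
  have hV : push (Prod.fst : 𝒱 × α → 𝒱) jm = push (Prod.fst : 𝒱 × α → 𝒱) jm' := by
    rw [hjm, hjm', push_push, push_push]
  rw [hV]
  linarith [hmain]
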